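/- arXiv:1903.08731 — 4 statements merged into one kernel-verified Lean document; each statement's English description precedes it below -/
import Mathlib

section
/- The integral ∫_ℝ (sin(2πξ)/(πξ))^2 · χ_{{ξ : sin(2πξ)/(πξ) ≤ 0}}(ξ) dξ is at least 1/10, i.e., the L^2 mass of the sinc function sin(2πξ)/(πξ) over the set where it is nonpositive is at least 0.1. -/
/-!
Write `φ(ξ) = sin(2πξ)/(πξ)`. The set `{φ ≤ 0}` contains the half periods `(1/2, 1]`, `(3/2, 2]`
and their mirror images. On a half period `[m/2, (m+1)/2]` the weight `sin²(2πξ)` has mass `1/4`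
and, being symmetric about the midpoint `c = (2m+1)/4`, has mean `c`; integrating it against the
tangent line of the convex function `ξ⁻²` at `c` gives `∫ φ² ≥ 4 / (π² (2m+1)²)`. For
`m = -4, -2, 1, 3` these bounds add up to `464 / (441 π²) > 1/10`.
-/

open MeasureTheory Real Set Function

noncomputable def phi (ξ : ℝ) : ℝ := sin (2 * π * ξ) / (π * ξ)

def halfPeriod (m : ℤ) : Set ℝ := Ioc ((m : ℝ) / 2) ((m + 1) / 2)

lemma phi_eq_two_mul_sinc {ξ : ℝ} (hξ : ξ ≠ 0) : phi ξ = 2 * sinc (2 * π * ξ) := by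
  rw [sinc_of_ne_zero (by positivity), phi]
  field_simp

lemma abs_phi_le_two (ξ : ℝ) : |phi ξ| ≤ 2 := by
  rcases eq_or_ne ξ 0 with rfl | hξ
  · simp [phi]
  · rw [phi_eq_two_mul_sinc hξ, abs_mul, abs_two]
    linarith [abs_sinc_le_one (2 * π * ξ)]

lemma phi_sq_mul_one_add_sq_le (ξ : ℝ) : phi ξ ^ 2 * (1 + ξ ^ 2) ≤ 5 := by
  have h_sq : phi ξ ^ 2 ≤ 4 := by
    nlinarith [abs_phi_le_two ξ, sq_abs (phi ξ), abs_nonneg (phi ξ)]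
  have h_mul : (phi ξ * ξ) ^ 2 ≤ 1 := by
    rcases eq_or_ne ξ 0 with rfl | hξ
    · simp
    · have : phi ξ * ξ = sin (2 * π * ξ) / π := by
        rw [phi]; field_simp
      rw [this, div_pow, div_le_one (by positivity)]
      nlinarith [sin_sq_le_one (2 * π * ξ), pi_gt_three]
  nlinarith

lemma integrable_phi_sq : Integrable fun ξ ↦ phi ξ ^ 2 := by
  refine (integrable_inv_one_add_sq.const_mul 5).mono'
    (Measurable.aestronglyMeasurable (by unfold phi; fun_prop)) ?_
  refine Filter.Eventually.of_forall fun ξ ↦ ?_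
  rw [norm_of_nonneg (sq_nonneg _), ← div_eq_mul_inv, le_div_iff₀ (by positivity)]
  exact phi_sq_mul_one_add_sq_le ξ

lemma phi_nonpos_of_mem_halfPeriod {m : ℤ} (hm : Odd m ↔ 0 ≤ m) {ξ : ℝ}
    (hξ : ξ ∈ halfPeriod m) : phi ξ ≤ 0 := by
  obtain ⟨hlo, hhi⟩ := hξ
  have h_sign : 0 ≤ (-1) ^ m * sin (2 * π * ξ) := by
    rw [← sin_sub_int_mul_pi]
    apply sin_nonneg_of_nonneg_of_le_pi <;> nlinarith [pi_pos]
  rcases m.even_or_odd with h_even | h_odd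
  · have hm_neg : m ≤ -1 := by have := mt hm.2 (Int.not_odd_iff_even.2 h_even); omega
    have : (m : ℝ) ≤ -1 := by exact_mod_cast hm_neg
    rw [h_even.neg_one_zpow, one_mul] at h_sign
    exact div_nonpos_of_nonneg_of_nonpos h_sign (by nlinarith [pi_pos])
  · have : (0 : ℝ) ≤ m := by exact_mod_cast hm.1 h_odd
    rw [h_odd.neg_one_zpow, neg_one_mul, neg_nonneg] at h_sign
    exact div_nonpos_of_nonpos_of_nonneg h_sign (by nlinarith [pi_pos])

lemma inv_sq_tangent_le {x c : ℝ} (h : 0 < x * c) :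
    (c ^ 2)⁻¹ - 2 * (x - c) / c ^ 3 ≤ (x ^ 2)⁻¹ := by
  have hx : x ≠ 0 := by rintro rfl; simp at h
  have hc : c ≠ 0 := by rintro rfl; simp at h
  rw [← sub_nonneg]
  have : (x ^ 2)⁻¹ - ((c ^ 2)⁻¹ - 2 * (x - c) / c ^ 3) =
      (x - c) ^ 2 * (c * c + 2 * (x * c)) / (x ^ 2 * c ^ 4) := by
    field_simp; ring
  rw [this]
  exact div_nonneg (mul_nonneg (sq_nonneg _) (by nlinarith [mul_self_nonneg c])) (by positivity)

lemma intervalIntegral.integral_eq_zero_of_comp_add_sub_eq_neg {f : ℝ → ℝ} {a b : ℝ}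
    (hf : ∀ x, f (a + b - x) = -f x) : ∫ x in a..b, f x = 0 := by
  have h := intervalIntegral.integral_comp_sub_left f (a + b) (a := a) (b := b)
  simp only [hf, intervalIntegral.integral_neg, add_sub_cancel_right,
    add_sub_cancel_left] at h
  linarith

lemma integral_sin_sq_halfPeriod (m : ℤ) :
    ∫ ξ in (m : ℝ) / 2..(m + 1) / 2, sin (2 * π * ξ) ^ 2 = 1 / 4 := by
  rw [intervalIntegral.integral_comp_mul_left (fun x ↦ sin x ^ 2) (by positivity),
    integral_sin_sq]
  have h₁ : 2 * π * ((m : ℝ) / 2) = m * π := by ring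
  have h₂ : 2 * π * (((m : ℝ) + 1) / 2) = ((m + 1 : ℤ) : ℝ) * π := by push_cast; ring
  rw [h₁, h₂, sin_int_mul_pi, sin_int_mul_pi, smul_eq_mul]
  push_cast
  field_simp
  ring

lemma integral_sub_mul_sin_sq_halfPeriod (m : ℤ) :
    ∫ ξ in (m : ℝ) / 2..(m + 1) / 2, (ξ - (2 * m + 1) / 4) * sin (2 * π * ξ) ^ 2 = 0 := by
  apply intervalIntegral.integral_eq_zero_of_comp_add_sub_eq_neg
  intro x
  have h : 2 * π * ((m : ℝ) / 2 + (m + 1) / 2 - x) = ((2 * m + 1 : ℤ) : ℝ) * π - 2 * π * x := by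
    push_cast; ring
  rw [h, sin_int_mul_pi_sub, (odd_two_mul_add_one m).neg_one_zpow]
  ring

lemma le_integral_halfPeriod_phi_sq {m : ℤ} (hm₀ : m ≠ 0) (hm₁ : m ≠ -1) :
    4 / (π ^ 2 * (2 * m + 1) ^ 2) ≤ ∫ ξ in halfPeriod m, phi ξ ^ 2 := by
  obtain ⟨c, hc⟩ : ∃ c : ℝ, c = (2 * m + 1) / 4 := ⟨_, rfl⟩
  have hab : (m : ℝ) / 2 ≤ (m + 1) / 2 := by linarith
  have hxc : ∀ x ∈ Icc ((m : ℝ) / 2) ((m + 1) / 2), 0 < x * c := by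
    intro x ⟨hlo, hhi⟩
    rcases (by omega : 1 ≤ m ∨ m ≤ -2) with h | h
    · have : (1 : ℝ) ≤ m := by exact_mod_cast h
      nlinarith
    · have : (m : ℝ) ≤ -2 := by exact_mod_cast h
      nlinarith
  have h_odd : (2 * (m : ℝ) + 1) ≠ 0 := by exact_mod_cast (by omega : 2 * m + 1 ≠ 0)
  have hcont : Continuous fun ξ ↦ sin (2 * π * ξ) ^ 2 := by fun_prop
  calc 4 / (π ^ 2 * (2 * m + 1) ^ 2)
      = ∫ ξ in (m : ℝ) / 2..(m + 1) / 2, (c ^ 2 * π ^ 2)⁻¹ * sin (2 * π * ξ) ^ 2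
          - 2 / (c ^ 3 * π ^ 2) * ((ξ - c) * sin (2 * π * ξ) ^ 2) := by
        rw [intervalIntegral.integral_sub ((hcont.intervalIntegrable _ _).const_mul _)
            ((Continuous.intervalIntegrable (by fun_prop) _ _).const_mul _),
          intervalIntegral.integral_const_mul, intervalIntegral.integral_const_mul,
          integral_sin_sq_halfPeriod, hc, integral_sub_mul_sin_sq_halfPeriod]
        field_simp
        ring
    _ ≤ ∫ ξ in (m : ℝ) / 2..(m + 1) / 2, phi ξ ^ 2 := by
        refine intervalIntegral.integral_mono_on hab
          (Continuous.intervalIntegrable (by fun_prop) _ _)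
          integrable_phi_sq.intervalIntegrable fun ξ hξ ↦ ?_
        calc (c ^ 2 * π ^ 2)⁻¹ * sin (2 * π * ξ) ^ 2
              - 2 / (c ^ 3 * π ^ 2) * ((ξ - c) * sin (2 * π * ξ) ^ 2)
            = sin (2 * π * ξ) ^ 2 * ((c ^ 2)⁻¹ - 2 * (ξ - c) / c ^ 3) / π ^ 2 := by ring
          _ ≤ sin (2 * π * ξ) ^ 2 * (ξ ^ 2)⁻¹ / π ^ 2 := by
              gcongr
              exact inv_sq_tangent_le (hxc ξ hξ)
          _ = phi ξ ^ 2 := by rw [phi]; ring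
    _ = ∫ ξ in halfPeriod m, phi ξ ^ 2 := intervalIntegral.integral_of_le hab

lemma pairwise_disjoint_halfPeriod : Pairwise (Disjoint on halfPeriod) := by
  convert pairwise_disjoint_Ioc_add_zsmul (0 : ℝ) (1 / 2) using 3 with m
  rw [halfPeriod, zsmul_eq_mul, zsmul_eq_mul]
  congr 1 <;> push_cast <;> ring

theorem sinc_negative_mass :
    (1 / 10 : ℝ) ≤
      ∫ ξ in {ξ : ℝ | Real.sin (2 * Real.pi * ξ) / (Real.pi * ξ) ≤ 0},
        (Real.sin (2 * Real.pi * ξ) / (Real.pi * ξ)) ^ 2 := by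
  change (1 / 10 : ℝ) ≤ ∫ ξ in {ξ | phi ξ ≤ 0}, phi ξ ^ 2
  let S : Finset ℤ := {-4, -2, 1, 3}
  have h_sub : ⋃ m ∈ S, halfPeriod m ⊆ {ξ | phi ξ ≤ 0} :=
    iUnion₂_subset fun m hm ↦ fun ξ hξ ↦
      phi_nonpos_of_mem_halfPeriod (by fin_cases hm <;> decide) hξ
  calc (1 / 10 : ℝ)
      ≤ ∑ m ∈ S, 4 / (π ^ 2 * (2 * m + 1) ^ 2) := by
        have h_sum : ∑ m ∈ S, 4 / (π ^ 2 * (2 * m + 1) ^ 2) = 464 / (441 * π ^ 2) := by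
          norm_num [S]
          field_simp
          norm_num
        rw [h_sum, le_div_iff₀ (by positivity)]
        nlinarith [pi_pos, pi_lt_d2]
    _ ≤ ∑ m ∈ S, ∫ ξ in halfPeriod m, phi ξ ^ 2 :=
        Finset.sum_le_sum fun m hm ↦ le_integral_halfPeriod_phi_sq
          (by fin_cases hm <;> decide) (by fin_cases hm <;> decide)
    _ = ∫ ξ in ⋃ m ∈ S, halfPeriod m, phi ξ ^ 2 :=
        (integral_biUnion_finset S (fun _ _ ↦ measurableSet_Ioc)
          (pairwise_disjoint_halfPeriod.set_pairwise _)
          fun _ _ ↦ integrable_phi_sq.integrableOn).symm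
    _ ≤ ∫ ξ in {ξ | phi ξ ≤ 0}, phi ξ ^ 2 :=
        setIntegral_mono_set integrable_phi_sq.integrableOn
          (ae_of_all _ fun _ ↦ sq_nonneg _) h_sub.eventuallyLE
end

section
/- (Theorem 2, main bound) For every nonnegative f in L^1(ℝ) ∩ L^2(ℝ), min over t ∈ [0,1] of ∫_ℝ f(x) f(x+t) dx is at most 0.42 ‖f‖_{L^1}^2. Equivalently: if ∫_ℝ f(x) f(x+t) dx ≥ 1/2 for all t ∈ [0,1], then ‖f‖_{L^1} ≥ √(1 − inf_{x>0} sin(x)/x) ≈ 1.10328. -/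
open MeasureTheory Real Set

/-!
Write `A t = ∫ x, f x * f (x + t)`. Fubini and the shear `(x, t) ↦ (x, x + t)` give, for every `ξ`,
`∫ A t * (1 - cos (ξ t)) dt = (∫ f) ^ 2 - |f̂ ξ| ^ 2 ≤ (∫ f) ^ 2`.
As `A` is even and nonnegative, `A ≥ c` on `[0, 1]` therefore forces
`c * ∫_{-1}^{1} (1 - cos (ξ t)) dt = 2 c (1 - sinc ξ) ≤ (∫ f) ^ 2`.
With `c = 1/2` this holds for all `ξ`, which is the second claim; for the first, `ξ = 3π/2`
(where `sinc ξ = -2/(3π)`) already gives the constant `1 / (2 + 4/(3π)) ≈ 0.4125 < 0.42`.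
-/

theorem integral_mul_comp_add_neg {G : Type*} [AddGroup G] [MeasurableSpace G] [MeasurableAdd G]
    (μ : Measure G) [μ.IsAddRightInvariant] (f : G → ℝ) (t : G) :
    ∫ x, f x * f (x + -t) ∂μ = ∫ x, f x * f (x + t) ∂μ := by
  rw [← integral_add_right_eq_self (fun x => f x * f (x + -t)) t]
  simp [mul_comm]

theorem integral_mul_mul_cos_sub {α : Type*} [MeasurableSpace α] {μ : Measure α} [SFinite μ]
    {f φ : α → ℝ} (hf : Integrable f μ) (hφ : Measurable φ) :
    ∫ p, f p.1 * f p.2 * cos (φ p.2 - φ p.1) ∂μ.prod μ =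
      (∫ x, f x * cos (φ x) ∂μ) ^ 2 + (∫ x, f x * sin (φ x) ∂μ) ^ 2 := by
  set fc := fun x => f x * cos (φ x)
  set fs := fun x => f x * sin (φ x)
  have hfc : Integrable fc μ :=
    hf.mul_bdd (hφ.cos.aestronglyMeasurable) (.of_forall fun x => abs_cos_le_one _)
  have hfs : Integrable fs μ :=
    hf.mul_bdd (hφ.sin.aestronglyMeasurable) (.of_forall fun x => abs_sin_le_one _)
  have hsplit : ∀ p : α × α,
      f p.1 * f p.2 * cos (φ p.2 - φ p.1) = fc p.1 * fc p.2 + fs p.1 * fs p.2 :=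
    fun p => by simp only [fc, fs, cos_sub]; ring
  simp_rw [hsplit]
  rw [integral_add (hfc.mul_prod hfc) (hfs.mul_prod hfs), integral_prod_mul fc fc,
    integral_prod_mul fs fs, sq, sq]

theorem integral_one_sub_cos_mul (ξ : ℝ) :
    ∫ t in (-1)..1, (1 - cos (ξ * t)) = 2 * (1 - sinc ξ) := by
  rcases eq_or_ne ξ 0 with rfl | hξ
  · simp
  rw [intervalIntegral.integral_sub intervalIntegrable_const
    ((by fun_prop : Continuous fun t => cos (ξ * t)).intervalIntegrable _ _),
    intervalIntegral.integral_comp_mul_left (fun t => cos t) hξ, integral_cos, sinc_of_ne_zero hξ]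
  simp only [intervalIntegral.integral_const, sub_neg_eq_add, smul_eq_mul, mul_one, mul_neg,
    sin_neg]
  field_simp
  ring

theorem one_lt_mul_two_mul_one_sub_sinc_three_pi_div_two :
    1 < 0.42 * (2 * (1 - sinc (3 * π / 2))) := by
  have hsinc : sinc (3 * π / 2) = -(2 / (3 * π)) := by
    rw [sinc_of_ne_zero (by positivity),
      show 3 * π / 2 = π / 2 + π by ring, sin_add_pi, sin_pi_div_two]
    field_simp
    norm_num
  have hbound : 0.2 < 2 / (3 * π) := by
    rw [lt_div_iff₀ (by positivity)]
    linarith [pi_lt_d2]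
  rw [hsinc]
  linarith

section Autocorrelation

variable {f : ℝ → ℝ}

theorem integrable_mul_comp_add_mul_one_sub_cos (hf : Integrable f) (ξ : ℝ) :
    Integrable (fun p : ℝ × ℝ => f p.1 * f (p.1 + p.2) * (1 - cos (ξ * p.2)))
      (volume.prod volume) := by
  have hshear : Integrable (fun p : ℝ × ℝ => f p.1 * f (p.1 + p.2)) (volume.prod volume) :=
    ((measurePreserving_prod_add volume volume).integrable_comp_emb
      (MeasurableEquiv.shearAddRight ℝ).measurableEmbedding).mpr (hf.mul_prod hf)
  refine hshear.mul_bdd (c := 2) (by fun_prop) (.of_forall fun p => ?_)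
  rw [norm_eq_abs, abs_le]
  constructor <;> linarith [neg_one_le_cos (ξ * p.2), cos_le_one (ξ * p.2)]

theorem integral_autocorrelation_mul_one_sub_cos_le (hf : Integrable f) (ξ : ℝ) :
    ∫ t, (∫ x, f x * f (x + t)) * (1 - cos (ξ * t)) ≤ (∫ x, f x) ^ 2 := by
  have hK : Integrable (fun q : ℝ × ℝ => f q.1 * f q.2 * cos (ξ * q.2 - ξ * q.1))
      (volume.prod volume) :=
    (hf.mul_prod hf).mul_bdd (by fun_prop) (.of_forall fun q => abs_cos_le_one _)
  calc ∫ t, (∫ x, f x * f (x + t)) * (1 - cos (ξ * t))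
      = ∫ p : ℝ × ℝ, f p.1 * f (p.1 + p.2) * (1 - cos (ξ * p.2)) ∂(volume.prod volume) := by
        rw [integral_prod_symm _ (integrable_mul_comp_add_mul_one_sub_cos hf ξ)]
        simp_rw [integral_mul_const]
    _ = ∫ q : ℝ × ℝ, f q.1 * f q.2 * (1 - cos (ξ * q.2 - ξ * q.1)) ∂(volume.prod volume) := by
        conv_rhs => rw [← (measurePreserving_prod_add volume volume).integral_comp
          (MeasurableEquiv.shearAddRight ℝ).measurableEmbedding]
        simp only [mul_add, add_sub_cancel_left]
    _ = (∫ x, f x) ^ 2 - ((∫ x, f x * cos (ξ * x)) ^ 2 + (∫ x, f x * sin (ξ * x)) ^ 2) := by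
        simp_rw [mul_one_sub]
        rw [integral_sub (hf.mul_prod hf) hK, integral_prod_mul f f,
          integral_mul_mul_cos_sub hf (by fun_prop)]
        ring
    _ ≤ (∫ x, f x) ^ 2 := sub_le_self _ (by positivity)

theorem mul_two_mul_one_sub_sinc_le (hpos : ∀ x, 0 ≤ f x) (hf : Integrable f) {c : ℝ}
    (hc : ∀ t ∈ Icc (0 : ℝ) 1, c ≤ ∫ x, f x * f (x + t)) (ξ : ℝ) :
    c * (2 * (1 - sinc ξ)) ≤ (∫ x, f x) ^ 2 := by
  have hc' : ∀ t ∈ Icc (-1 : ℝ) 1, c ≤ ∫ x, f x * f (x + t) := by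
    rintro t ⟨h₁, h₂⟩
    rcases le_total 0 t with ht | ht
    · exact hc t ⟨ht, h₂⟩
    · rw [← integral_mul_comp_add_neg]
      exact hc (-t) ⟨by linarith, by linarith⟩
  have hweight : ∀ t, 0 ≤ 1 - cos (ξ * t) := fun t => sub_nonneg.2 (cos_le_one _)
  have hA : Integrable fun t => (∫ x, f x * f (x + t)) * (1 - cos (ξ * t)) := by
    refine (integrable_mul_comp_add_mul_one_sub_cos hf ξ).integral_prod_right.congr
      (.of_forall fun t => ?_)
    exact integral_mul_const (1 - cos (ξ * t)) _
  calc c * (2 * (1 - sinc ξ)) = ∫ t in (-1)..1, c * (1 - cos (ξ * t)) := by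
        rw [intervalIntegral.integral_const_mul, integral_one_sub_cos_mul]
    _ ≤ ∫ t in (-1)..1, (∫ x, f x * f (x + t)) * (1 - cos (ξ * t)) :=
        intervalIntegral.integral_mono_on (by norm_num)
          ((by fun_prop : Continuous fun t => c * (1 - cos (ξ * t))).intervalIntegrable _ _)
          hA.intervalIntegrable fun t ht => mul_le_mul_of_nonneg_right (hc' t ht) (hweight t)
    _ ≤ ∫ t, (∫ x, f x * f (x + t)) * (1 - cos (ξ * t)) := by
        rw [intervalIntegral.integral_of_le (by norm_num)]
        exact setIntegral_le_integral hA (.of_forall fun t =>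
          mul_nonneg (integral_nonneg fun x => mul_nonneg (hpos x) (hpos _)) (hweight t))
    _ ≤ (∫ x, f x) ^ 2 := integral_autocorrelation_mul_one_sub_cos_le hf ξ

theorem exists_autocorrelation_le (hpos : ∀ x, 0 ≤ f x) (hf : Integrable f) :
    ∃ t ∈ Icc (0 : ℝ) 1, ∫ x, f x * f (x + t) ≤ 0.42 * (∫ x, f x) ^ 2 := by
  rcases eq_or_ne (∫ x, f x) 0 with hI | hI
  · have hf0 : f =ᵐ[volume] 0 := (integral_eq_zero_iff_of_nonneg hpos hf).mp hI
    refine ⟨0, left_mem_Icc.2 zero_le_one, le_of_eq ?_⟩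
    rw [hI, integral_eq_zero_of_ae (by filter_upwards [hf0] with x hx; simp [hx])]
    ring
  · by_contra! hlt
    have := mul_two_mul_one_sub_sinc_le hpos hf (fun t ht => (hlt t ht).le) (3 * π / 2)
    have hI2 : 0 < (∫ x, f x) ^ 2 := by positivity
    nlinarith [one_lt_mul_two_mul_one_sub_sinc_three_pi_div_two]

theorem sqrt_one_sub_sInf_sinc_le (hpos : ∀ x, 0 ≤ f x) (hf : Integrable f)
    (h : ∀ t ∈ Icc (0 : ℝ) 1, 1 / 2 ≤ ∫ x, f x * f (x + t)) :
    √(1 - sInf (range sinc)) ≤ ∫ x, f x := by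
  have hsInf : 1 - (∫ x, f x) ^ 2 ≤ sInf (range sinc) :=
    le_csInf (range_nonempty _) (forall_mem_range.2 fun ξ => by
      linarith [mul_two_mul_one_sub_sinc_le hpos hf h ξ])
  calc √(1 - sInf (range sinc)) ≤ √((∫ x, f x) ^ 2) := sqrt_le_sqrt (by linarith)
    _ = ∫ x, f x := sqrt_sq (integral_nonneg hpos)

end Autocorrelation

theorem theorem_two_general (f : ℝ → ℝ) (hpos : ∀ x, 0 ≤ f x) (hf1 : Integrable f) :
    (∃ t ∈ Set.Icc (0 : ℝ) 1, ∫ x : ℝ, f x * f (x + t) ≤ 0.42 * (∫ x : ℝ, f x) ^ 2) ∧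
      ((∀ t ∈ Set.Icc (0 : ℝ) 1, (1 / 2 : ℝ) ≤ ∫ x : ℝ, f x * f (x + t)) →
        Real.sqrt (1 - sInf (Set.range fun x : ℝ => if x = 0 then 1 else Real.sin x / x)) ≤
          ∫ x : ℝ, f x) :=
  ⟨exists_autocorrelation_le hpos hf1, sqrt_one_sub_sInf_sinc_le hpos hf1⟩

theorem theorem_two (f : ℝ → ℝ) (hpos : ∀ x, 0 ≤ f x) (hf1 : Integrable f)
    (hf2 : MemLp f 2 (volume : Measure ℝ)) :
    (∃ t ∈ Set.Icc (0 : ℝ) 1, ∫ x : ℝ, f x * f (x + t) ≤ 0.42 * (∫ x : ℝ, f x) ^ 2) ∧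
      ((∀ t ∈ Set.Icc (0 : ℝ) 1, (1 / 2 : ℝ) ≤ ∫ x : ℝ, f x * f (x + t)) →
        Real.sqrt (1 - sInf (Set.range fun x : ℝ => if x = 0 then 1 else Real.sin x / x)) ≤
          ∫ x : ℝ, f x) :=
  theorem_two_general f hpos hf1
end

section
/- The infimum of sin(x)/x over x ∈ ℝ (with value 1 at 0) lies in the interval (−0.2173, −0.2172); in particular it is strictly between −1/4 and −1/5. -/
/-!
Let a = 4.4934, close to the minimiser of sinc. Since sin is convex on [π, 2π], it lies above its
tangent line at a there; together with sin ≥ 0 on [0, π] and sin ≥ -1 beyond 2π this gives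
sin x ≥ -0.21728 x for x ≥ 0, so sinc ≥ -0.21728 by evenness, while sinc a < -0.2172.
The values of sin a and cos a are enclosed by Taylor bounds at 3π/2 - a ≈ 0.219.
-/

open Real Set

theorem ConvexOn.add_mul_sub_le_of_hasDerivAt {S : Set ℝ} {f : ℝ → ℝ} {f' a x : ℝ}
    (hf : ConvexOn ℝ S f) (ha : a ∈ S) (hx : x ∈ S) (hf' : HasDerivAt f f' a) :
    f a + f' * (x - a) ≤ f x := by
  rcases lt_trichotomy x a with hxa | rfl | hax
  · have := hf.slope_le_of_hasDerivAt hx ha hxa hf'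
    rw [slope_def_field, div_le_iff₀ (sub_pos.2 hxa)] at this
    linarith
  · simp
  · have := hf.le_slope_of_hasDerivAt ha hx hax hf'
    rw [slope_def_field, le_div_iff₀ (sub_pos.2 hax)] at this
    linarith

theorem convexOn_sin_Icc_pi_two_pi : ConvexOn ℝ (Icc π (2 * π)) sin := by
  apply convexOn_of_deriv2_nonneg (convex_Icc _ _) continuousOn_sin
    differentiable_sin.differentiableOn (by simp [differentiable_cos.differentiableOn]) fun x hx => ?_
  rw [interior_Icc] at hx
  have : sin x ≤ 0 := by
    rw [← sin_sub_two_pi]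
    exact sin_nonpos_of_nonpos_of_neg_pi_le (by linarith [hx.2]) (by linarith [hx.1])
  simpa using this

theorem sin_add_cos_mul_sub_le_sin {a x : ℝ} (ha : a ∈ Icc π (2 * π)) (hx : x ∈ Icc π (2 * π)) :
    sin a + cos a * (x - a) ≤ sin x :=
  convexOn_sin_Icc_pi_two_pi.add_mul_sub_le_of_hasDerivAt ha hx (hasDerivAt_sin a)

theorem cos_mem_Icc_of_mem_Icc {u : ℝ} (hu : u ∈ Icc (0.218988 : ℝ) 0.2189895) :
    cos u ∈ Icc (0.97602 : ℝ) 0.97615 := by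
  obtain ⟨hu₁, hu₂⟩ := hu
  have hcos := (abs_le.1 (cos_bound (x := u) (abs_le.2 ⟨by linarith, by linarith⟩))).2
  rw [abs_of_nonneg (by linarith)] at hcos
  constructor
  · nlinarith [one_sub_sq_div_two_le_cos (x := u)]
  · nlinarith [pow_le_pow_left₀ (by linarith : (0:ℝ) ≤ u) hu₂ 4]

theorem sin_mem_Icc_of_mem_Icc {u : ℝ} (hu : u ∈ Icc (0.218988 : ℝ) 0.2189895) :
    sin u ∈ Icc (0.21723 : ℝ) 0.21725 := by
  obtain ⟨hu₁, hu₂⟩ := hu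
  have hsin := (abs_le.1 (sin_bound (x := u) (abs_le.2 ⟨by linarith, by linarith⟩))).2
  rw [abs_of_nonneg (by linarith)] at hsin
  constructor
  · nlinarith [sin_ge_sub_cube (x := u) (by linarith),
      pow_le_pow_left₀ (by linarith : (0:ℝ) ≤ u) hu₂ 3]
  · nlinarith [pow_le_pow_left₀ (by linarith : (0:ℝ) ≤ u) hu₂ 5,
      pow_le_pow_left₀ (by norm_num) hu₁ 3]

theorem three_pi_div_two_sub_mem_Icc : 3 * π / 2 - 4.4934 ∈ Icc (0.218988 : ℝ) 0.2189895 :=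
  ⟨by linarith [pi_gt_d6], by linarith [pi_lt_d6]⟩

theorem sin_eq_neg_cos_three_pi_div_two_sub (x : ℝ) : sin x = -cos (3 * π / 2 - x) := by
  rw [show 3 * π / 2 - x = π / 2 - x + π by ring, cos_add_pi, cos_pi_div_two_sub, neg_neg]

theorem cos_eq_neg_sin_three_pi_div_two_sub (x : ℝ) : cos x = -sin (3 * π / 2 - x) := by
  rw [show 3 * π / 2 - x = π / 2 - x + π by ring, sin_add_pi, sin_pi_div_two_sub, neg_neg]

theorem sin_4_4934_mem_Icc : sin 4.4934 ∈ Icc (-0.97615 : ℝ) (-0.97602) := by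
  have h := cos_mem_Icc_of_mem_Icc three_pi_div_two_sub_mem_Icc
  rw [sin_eq_neg_cos_three_pi_div_two_sub]
  exact ⟨by linarith [h.2], by linarith [h.1]⟩

theorem cos_4_4934_mem_Icc : cos 4.4934 ∈ Icc (-0.21725 : ℝ) (-0.21723) := by
  have h := sin_mem_Icc_of_mem_Icc three_pi_div_two_sub_mem_Icc
  rw [cos_eq_neg_sin_three_pi_div_two_sub]
  exact ⟨by linarith [h.2], by linarith [h.1]⟩

theorem neg_mul_le_sin_of_nonneg {x : ℝ} (hx : 0 ≤ x) : -0.21728 * x ≤ sin x := by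
  rcases le_or_gt x π with hxπ | hπx
  · linarith [sin_nonneg_of_nonneg_of_le_pi hx hxπ]
  rcases le_or_gt x (2 * π) with hx2π | h2πx
  · obtain ⟨hs₁, -⟩ := sin_4_4934_mem_Icc
    obtain ⟨hc₁, hc₂⟩ := cos_4_4934_mem_Icc
    have htangent := sin_add_cos_mul_sub_le_sin (a := 4.4934)
      ⟨by linarith [pi_lt_d6], by linarith [pi_gt_d6]⟩ ⟨hπx.le, hx2π⟩
    -- the tangent line at 4.4934, plus 0.21728 x, is affine with nonnegative slope and positive at π
    have hπ : 0 ≤ sin 4.4934 + cos 4.4934 * (π - 4.4934) + 0.21728 * π := by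
      nlinarith [pi_gt_d6, pi_lt_d6]
    nlinarith [mul_nonneg (by linarith : 0 ≤ cos 4.4934 + 0.21728) (by linarith : 0 ≤ x - π)]
  · linarith [neg_one_le_sin x, pi_gt_three]

theorem neg_le_sinc (x : ℝ) : -0.21728 ≤ sinc x := by
  wlog hx : 0 ≤ x generalizing x
  · simpa using this (-x) (by linarith)
  rcases hx.eq_or_lt with rfl | hx
  · norm_num [sinc_zero]
  · rw [sinc_of_ne_zero hx.ne', le_div_iff₀ hx]
    exact neg_mul_le_sin_of_nonneg hx.le

theorem sinc_4_4934_lt : sinc 4.4934 < -0.2172 := by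
  rw [sinc_of_ne_zero (by norm_num), div_lt_iff₀ (by norm_num)]
  linarith [sin_4_4934_mem_Icc.2]

theorem sinc_inf_bounds :
    sInf (Set.range fun x : ℝ => if x = 0 then 1 else Real.sin x / x) ∈
        Set.Ioo (-0.2173 : ℝ) (-0.2172) ∧
      (-(1/4) : ℝ) < sInf (Set.range fun x : ℝ => if x = 0 then 1 else Real.sin x / x) ∧
      sInf (Set.range fun x : ℝ => if x = 0 then 1 else Real.sin x / x) < -(1/5) := by
  change sInf (range sinc) ∈ Ioo (-0.2173 : ℝ) (-0.2172) ∧ -(1/4) < sInf (range sinc) ∧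
    sInf (range sinc) < -(1/5)
  have hlower : -0.21728 ≤ sInf (range sinc) :=
    le_csInf (range_nonempty _) (forall_mem_range.2 neg_le_sinc)
  have hupper : sInf (range sinc) ≤ sinc 4.4934 :=
    csInf_le ⟨_, forall_mem_range.2 neg_le_sinc⟩ (mem_range_self _)
  have hwitness := sinc_4_4934_lt
  exact ⟨⟨by linarith, by linarith⟩, by linarith, by linarith⟩
end

section
/- Let f(x) = χ_{(−1/2,1/2)}(x)/√(1−4x²) be the arcsine density. Then for every t with 0 < t < 1, ∫_ℝ f(x) f(x+t) dx ≥ π/4. -/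
/-!
On the overlap `(-1/2, 1/2 - t)` of the supports, `f x * f (x + t)` factors as
`w x / √((x + 1/2) * (1/2 - t - x))`, where `w x = (2 * √((1 - 2x) * (1 + 2(x + t))))⁻¹`
collects the two factors that stay away from zero, so `1/4 ≤ w ≤ 1/(4t)` there. The remaining
chord density `((x - a) * (b - x))^(-1/2)` integrates to `π` over `(a, b)` (its antiderivative
is `arcsin ((2x - a - b) / (b - a))`), so the lower bound on `w` gives `π/4`, and the upper
bound gives integrability.
-/

open MeasureTheory Real Set

theorem hasDerivAt_arcsin_chord {a b x : ℝ} (hx : x ∈ Ioo a b) :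
    HasDerivAt (fun y => arcsin ((2 * y - a - b) / (b - a))) (√((x - a) * (b - x)))⁻¹ x := by
  obtain ⟨hax, hxb⟩ := hx
  have hba : 0 < b - a := by linarith
  have hu : 1 - ((2 * x - a - b) / (b - a)) ^ 2 = (2 / (b - a)) ^ 2 * ((x - a) * (b - x)) := by
    field_simp; ring
  have hlin : HasDerivAt (fun y => (2 * y - a - b) / (b - a)) (2 / (b - a)) x := by
    simpa using ((((hasDerivAt_id x).const_mul 2).sub_const a).sub_const b).div_const (b - a)
  have hne1 : (2 * x - a - b) / (b - a) ≠ -1 := by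
    rw [ne_eq, div_eq_iff hba.ne']; linarith
  have hne2 : (2 * x - a - b) / (b - a) ≠ 1 := by
    rw [ne_eq, div_eq_iff hba.ne']; linarith
  refine ((hasDerivAt_arcsin hne1 hne2).comp x hlin).congr_deriv ?_
  rw [hu, sqrt_mul (by positivity), sqrt_sq (by positivity)]
  field_simp

theorem integrableOn_inv_sqrt_chord (a b : ℝ) :
    IntegrableOn (fun x => (√((x - a) * (b - x)))⁻¹) (Ioc a b) :=
  intervalIntegral.integrableOn_deriv_of_nonneg (by fun_prop)
    (fun _ hx => hasDerivAt_arcsin_chord hx) (fun _ _ => by positivity)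

theorem integral_inv_sqrt_chord {a b : ℝ} (hab : a < b) :
    ∫ x in a..b, (√((x - a) * (b - x)))⁻¹ = π := by
  rw [intervalIntegral.integral_eq_sub_of_hasDeriv_right_of_le hab.le (by fun_prop)
    (fun _ hx => (hasDerivAt_arcsin_chord hx).hasDerivWithinAt)
    ((intervalIntegrable_iff_integrableOn_Ioc_of_le hab.le).2 (integrableOn_inv_sqrt_chord a b))]
  have hba : b - a ≠ 0 := by linarith
  have h1 : (2 * b - a - b) / (b - a) = 1 := by rw [div_eq_one_iff_eq hba]; ring
  have h2 : (2 * a - a - b) / (b - a) = -1 := by rw [div_eq_iff hba]; ring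
  simp only [h1, h2, arcsin_one, arcsin_neg]
  ring

noncomputable def arcsineDensity : ℝ → ℝ :=
  indicator (Ioo (-(1/2) : ℝ) (1/2)) fun x => 1 / √(1 - 4 * x ^ 2)

noncomputable def arcsineOverlapWeight (t x : ℝ) : ℝ :=
  (2 * √((1 - 2 * x) * (1 + 2 * (x + t))))⁻¹

theorem arcsineDensity_mul_shift {t : ℝ} (ht : 0 ≤ t) :
    (fun x => arcsineDensity x * arcsineDensity (x + t)) =
      indicator (Ioo (-(1/2)) (1/2 - t))
        fun x => arcsineOverlapWeight t x * (√((x - -(1/2)) * (1/2 - t - x)))⁻¹ := by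
  ext x
  by_cases hx : x ∈ Ioo (-(1/2)) (1/2 - t)
  · rw [indicator_of_mem hx]
    obtain ⟨hx₁, hx₂⟩ := hx
    have hxI : x ∈ Ioo (-(1/2) : ℝ) (1/2) := ⟨hx₁, by linarith⟩
    have hxtI : x + t ∈ Ioo (-(1/2) : ℝ) (1/2) := ⟨by linarith, by linarith⟩
    rw [arcsineDensity, indicator_of_mem hxI, indicator_of_mem hxtI, arcsineOverlapWeight]
    have hsplit : √(1 - 4 * x ^ 2) * √(1 - 4 * (x + t) ^ 2) =
        2 * √((1 - 2 * x) * (1 + 2 * (x + t))) * √((x - -(1/2)) * (1/2 - t - x)) := by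
      rw [← sqrt_mul (by nlinarith),
        show (1 - 4 * x ^ 2) * (1 - 4 * (x + t) ^ 2) = 2 ^ 2 *
          ((1 - 2 * x) * (1 + 2 * (x + t)) * ((x - -(1/2)) * (1/2 - t - x))) by ring,
        sqrt_mul (by norm_num), sqrt_sq (by norm_num), sqrt_mul (by nlinarith), mul_assoc]
    rw [div_mul_div_comm, one_mul, hsplit, one_div, mul_inv]
  · rw [indicator_of_notMem hx]
    simp only [mem_Ioo, not_and_or, not_lt] at hx
    rcases hx with hx | hx
    · rw [arcsineDensity, indicator_of_notMem (fun h => (not_lt.2 hx) h.1), zero_mul]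
    · rw [arcsineDensity, indicator_of_notMem (fun h : x + t ∈ _ => by linarith [h.2]), mul_zero]

theorem arcsineOverlapWeight_mem_Icc {t x : ℝ} (ht : 0 < t) (hx : x ∈ Ioo (-(1/2)) (1/2 - t)) :
    arcsineOverlapWeight t x ∈ Icc (1/4) (1 / (4 * t)) := by
  obtain ⟨hx₁, hx₂⟩ := hx
  have hlower : 2 * t ≤ √((1 - 2 * x) * (1 + 2 * (x + t))) :=
    le_sqrt_of_sq_le (by nlinarith)
  have hupper : √((1 - 2 * x) * (1 + 2 * (x + t))) ≤ 2 :=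
    sqrt_le_iff.2 ⟨by norm_num, by nlinarith⟩
  rw [arcsineOverlapWeight, mem_Icc, one_div, one_div]
  exact ⟨inv_anti₀ (by linarith) (by linarith), inv_anti₀ (by positivity) (by linarith)⟩

theorem integrableOn_arcsineOverlapWeight_mul {t : ℝ} (ht : 0 < t) :
    IntegrableOn (fun x => arcsineOverlapWeight t x * (√((x - -(1/2)) * (1/2 - t - x)))⁻¹)
      (Ioo (-(1/2)) (1/2 - t)) := by
  refine ((integrableOn_inv_sqrt_chord _ _).mono_set Ioo_subset_Ioc_self).bdd_mul
    (c := 1 / (4 * t)) (by unfold arcsineOverlapWeight; fun_prop) ?_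
  filter_upwards [ae_restrict_mem measurableSet_Ioo] with x hx
  have hw := arcsineOverlapWeight_mem_Icc ht hx
  rw [norm_of_nonneg (by linarith [hw.1])]
  exact hw.2

theorem arcsine_autocorr_lower (f : ℝ → ℝ)
    (hf : f = Set.indicator (Set.Ioo (-(1/2) : ℝ) (1/2))
      (fun x => 1 / Real.sqrt (1 - 4 * x ^ 2))) :
    ∀ t : ℝ, 0 < t → t < 1 → Real.pi / 4 ≤ ∫ x : ℝ, f x * f (x + t) := by
  subst hf
  intro t ht₀ ht₁
  change π / 4 ≤ ∫ x, arcsineDensity x * arcsineDensity (x + t)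
  rw [arcsineDensity_mul_shift ht₀.le, integral_indicator measurableSet_Ioo]
  have hchord := (integrableOn_inv_sqrt_chord (-(1/2)) (1/2 - t)).mono_set Ioo_subset_Ioc_self
  calc π / 4
        = ∫ x in Ioo (-(1/2)) (1/2 - t), 1/4 * (√((x - -(1/2)) * (1/2 - t - x)))⁻¹ := by
        rw [integral_const_mul, ← integral_Ioc_eq_integral_Ioo,
          ← intervalIntegral.integral_of_le (by linarith), integral_inv_sqrt_chord (by linarith)]
        ring
    _ ≤ _ := setIntegral_mono_on (hchord.const_mul _)
        (integrableOn_arcsineOverlapWeight_mul ht₀) measurableSet_Ioo fun x hx =>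
          mul_le_mul_of_nonneg_right (arcsineOverlapWeight_mem_Icc ht₀ hx).1 (by positivity)
end
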